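/- Let A be a commutative ring and L• = (L₁ →^{d₁} L₀ →^{d₀} L₋₁) a complex of flat A-modules with heart H = ker d₀/im d₁ and cokernel C = coker d₀. The following are equivalent: (1) the functor V : Q ↦ h₀(L• ⊗_A Q) is right exact; (2) for every A-module Q the natural map H ⊗_A Q → h₀(L• ⊗_A Q) is an isomorphism; (3) C is flat over A. -/
import Mathlib


universe u
set_option linter.unusedSectionVars false
set_option maxHeartbeats 1000000

variable {A : Type u} [CommRing A]
    {L1 L0 Lm1 : Type u} [AddCommGroup L1] [AddCommGroup L0] [AddCommGroup Lm1]
    [Module A L1] [Module A L0] [Module A Lm1]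

/-- The degree-zero homology `h₀(L• ⊗ Q)` of the complex `L₁ → L₀ → L₋₁`
tensored with `Q`. -/
abbrev H0 (d1 : L1 →ₗ[A] L0) (d0 : L0 →ₗ[A] Lm1)
    (Q : Type u) [AddCommGroup Q] [Module A Q] : Type u :=
  LinearMap.ker (d0.rTensor Q) ⧸
    (LinearMap.range (d1.rTensor Q)).comap (LinearMap.ker (d0.rTensor Q)).subtype

/-- The canonical map `H ⊗ Q → h₀(L• ⊗ Q)`, where `H = ker d₀ / im d₁` is the
heart of the complex. -/
noncomputable def natMap (d1 : L1 →ₗ[A] L0) (d0 : L0 →ₗ[A] Lm1)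
    (Q : Type u) [AddCommGroup Q] [Module A Q] :
    TensorProduct A
      (LinearMap.ker d0 ⧸ (LinearMap.range d1).comap (LinearMap.ker d0).subtype) Q →ₗ[A]
      H0 d1 d0 Q :=
  TensorProduct.lift
    (Submodule.liftQ _
      (TensorProduct.curry
        (((LinearMap.range (d1.rTensor Q)).comap
              (LinearMap.ker (d0.rTensor Q)).subtype).mkQ.comp
          (LinearMap.codRestrict (LinearMap.ker (d0.rTensor Q))
            ((LinearMap.ker d0).subtype.rTensor Q)
            (fun x => by
              have h : d0.comp (LinearMap.ker d0).subtype = 0 := by ext y; simp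
              rw [LinearMap.mem_ker, ← LinearMap.comp_apply, ← LinearMap.rTensor_comp, h]
              simp))))
      (by
        intro z hz
        rw [LinearMap.mem_ker]
        apply LinearMap.ext
        intro q
        obtain ⟨y, hy⟩ := Submodule.mem_comap.mp hz
        simp only [TensorProduct.curry_apply, LinearMap.comp_apply, Submodule.mkQ_apply,
          LinearMap.zero_apply]
        rw [Submodule.Quotient.mk_eq_zero]
        refine Submodule.mem_comap.mpr ⟨y ⊗ₜ q, ?_⟩
        simp [LinearMap.rTensor_tmul, hy]))
/-- Functoriality of `h₀(L• ⊗ −)` in the module variable: the map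
`h₀(L• ⊗ Q) → h₀(L• ⊗ Q')` induced by `f : Q → Q'`. -/
noncomputable def h0Map (d1 : L1 →ₗ[A] L0) (d0 : L0 →ₗ[A] Lm1)
    {Q Q' : Type u} [AddCommGroup Q] [Module A Q] [AddCommGroup Q'] [Module A Q']
    (f : Q →ₗ[A] Q') : H0 d1 d0 Q →ₗ[A] H0 d1 d0 Q' :=
  Submodule.mapQ _ _
    ((LinearMap.lTensor L0 f).restrict
      (p := LinearMap.ker (d0.rTensor Q)) (q := LinearMap.ker (d0.rTensor Q'))
      (fun x hx => by
        rw [LinearMap.mem_ker] at hx ⊢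
        have h : (d0.rTensor Q').comp (LinearMap.lTensor L0 f) =
            (LinearMap.lTensor Lm1 f).comp (d0.rTensor Q) := by
          rw [LinearMap.rTensor_comp_lTensor, LinearMap.lTensor_comp_rTensor]
        calc (d0.rTensor Q') ((LinearMap.lTensor L0 f) x)
            = ((d0.rTensor Q').comp (LinearMap.lTensor L0 f)) x := rfl
          _ = (LinearMap.lTensor Lm1 f) ((d0.rTensor Q) x) := by rw [h]; rfl
          _ = 0 := by rw [hx, map_zero]))
    (by
      intro x hx
      obtain ⟨y, hy⟩ := Submodule.mem_comap.mp hx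
      refine Submodule.mem_comap.mpr (Submodule.mem_comap.mpr ⟨LinearMap.lTensor L1 f y, ?_⟩)
      have h : (d1.rTensor Q').comp (LinearMap.lTensor L1 f) =
          (LinearMap.lTensor L0 f).comp (d1.rTensor Q) := by
        rw [LinearMap.rTensor_comp_lTensor, LinearMap.lTensor_comp_rTensor]
      calc (d1.rTensor Q') ((LinearMap.lTensor L1 f) y)
          = ((d1.rTensor Q').comp (LinearMap.lTensor L1 f)) y := rfl
        _ = (LinearMap.lTensor L0 f) ((d1.rTensor Q) y) := by rw [h]; rfl
        _ = _ := by rw [hy]; rfl)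

section Helpers
variable {A : Type u} [CommRing A]

lemma tsq {M N P Q : Type u} [AddCommGroup M] [AddCommGroup N] [AddCommGroup P]
    [AddCommGroup Q] [Module A M] [Module A N] [Module A P] [Module A Q]
    (f : M →ₗ[A] N) (g : P →ₗ[A] Q) (x : TensorProduct A M P) :
    f.rTensor Q (g.lTensor M x) = g.lTensor N (f.rTensor P x) := by
  rw [← LinearMap.comp_apply, ← LinearMap.comp_apply, LinearMap.rTensor_comp_lTensor,
    LinearMap.lTensor_comp_rTensor]

lemma key_rTensor {K M C : Type u} [AddCommGroup K] [AddCommGroup M] [AddCommGroup C]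
    [Module A K] [Module A M] [Module A C] (i : K →ₗ[A] M) (g : M →ₗ[A] C)
    (hi : Function.Injective i) (hg : Function.Surjective g) (hig : Function.Exact i g)
    [Module.Flat A C] (Q : Type u) [AddCommGroup Q] [Module A Q] :
    Function.Injective (i.rTensor Q) := by
  obtain ⟨F, iF1, iF2, iF3, p, hp⟩ : ∃ (F : Type u) (_ : AddCommGroup F) (_ : Module A F)
      (_ : Module.Flat A F) (p : F →ₗ[A] Q), Function.Surjective p :=
    ⟨Q →₀ A, inferInstance, inferInstance, inferInstance, Finsupp.linearCombination A _root_.id,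
      Finsupp.linearCombination_id_surjective A Q⟩
  rw [injective_iff_map_eq_zero]
  intro x hx
  set j : LinearMap.ker p →ₗ[A] F := (LinearMap.ker p).subtype with hjdef
  have hjp : Function.Exact j p := p.exact_subtype_ker_map
  obtain ⟨x', rfl⟩ := LinearMap.lTensor_surjective K hp x
  have h1 : p.lTensor M (i.rTensor F x') = 0 := (tsq i p x').symm.trans hx
  have hex : Function.Exact (j.lTensor M) (p.lTensor M) := lTensor_exact M hjp hp
  obtain ⟨y, hy⟩ := (hex (i.rTensor F x')).mp h1
  have hgi : g.comp i = 0 := by ext k; exact hig.apply_apply_eq_zero k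
  have h2 : j.lTensor C (g.rTensor (LinearMap.ker p) y) = 0 := by
    rw [← tsq g j y, hy, ← LinearMap.comp_apply, ← LinearMap.rTensor_comp, hgi,
      LinearMap.rTensor_zero, LinearMap.zero_apply]
  have h3 : g.rTensor (LinearMap.ker p) y = 0 := by
    apply Module.Flat.lTensor_preserves_injective_linearMap j (Submodule.injective_subtype _)
    rw [map_zero]; exact h2
  have hex2 : Function.Exact (i.rTensor (LinearMap.ker p)) (g.rTensor (LinearMap.ker p)) :=
    rTensor_exact (LinearMap.ker p) hig hg
  obtain ⟨z, hz⟩ := (hex2 y).mp h3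
  have h5 : i.rTensor F (j.lTensor K z) = i.rTensor F x' := by
    rw [tsq i j z, hz, hy]
  have h6 : j.lTensor K z = x' :=
    Module.Flat.rTensor_preserves_injective_linearMap i hi h5
  have hpj : p.comp j = 0 := by ext s; exact s.2
  rw [← h6, ← LinearMap.comp_apply, ← LinearMap.lTensor_comp, hpj, LinearMap.lTensor_zero,
    LinearMap.zero_apply]
lemma flat_of_ses {B N C : Type u} [AddCommGroup B] [AddCommGroup N] [AddCommGroup C]
    [Module A B] [Module A N] [Module A C] (i : B →ₗ[A] N) (g : N →ₗ[A] C)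
    (hi : Function.Injective i) (hg : Function.Surjective g) (hig : Function.Exact i g)
    [Module.Flat A N] [Module.Flat A C] : Module.Flat A B := by
  rw [Module.Flat.iff_lTensor_preserves_injective_linearMap]
  intro X Y _ _ _ _ f hf
  rw [injective_iff_map_eq_zero]
  intro x hx
  have h1 : f.lTensor N (i.rTensor X x) = 0 := by
    rw [← tsq i f x, hx, map_zero]
  have h2 : i.rTensor X x = 0 := by
    apply Module.Flat.lTensor_preserves_injective_linearMap f hf
    rw [map_zero]; exact h1
  apply key_rTensor i g hi hg hig X
  rw [map_zero]; exact h2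

end Helpers

section MainAux
variable {A : Type u} [CommRing A]
    {L1 L0 Lm1 : Type u} [AddCommGroup L1] [AddCommGroup L0] [AddCommGroup Lm1]
    [Module A L1] [Module A L0] [Module A Lm1]
variable (d1 : L1 →ₗ[A] L0) (d0 : L0 →ₗ[A] Lm1)

lemma exact_ker_rr : Function.Exact (LinearMap.ker d0).subtype d0.rangeRestrict := by
  rw [LinearMap.exact_iff, LinearMap.ker_rangeRestrict, Submodule.range_subtype]

lemma tmul_mem_ker (Q : Type u) [AddCommGroup Q] [Module A Q]
    (z : LinearMap.ker d0) (q : Q) :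
    ((z : L0) ⊗ₜ[A] q) ∈ LinearMap.ker (d0.rTensor Q) := by
  rw [LinearMap.mem_ker, LinearMap.rTensor_tmul, LinearMap.mem_ker.mp z.2,
    TensorProduct.zero_tmul]

lemma natMap_mk_tmul (Q : Type u) [AddCommGroup Q] [Module A Q]
    (z : LinearMap.ker d0) (q : Q) :
    natMap d1 d0 Q (Submodule.Quotient.mk z ⊗ₜ q) =
      Submodule.Quotient.mk ⟨(z : L0) ⊗ₜ q, tmul_mem_ker d0 Q z q⟩ := rfl

lemma h0Map_mk {Q Q' : Type u} [AddCommGroup Q] [Module A Q] [AddCommGroup Q'] [Module A Q']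
    (f : Q →ₗ[A] Q') (z : LinearMap.ker (d0.rTensor Q)) :
    h0Map d1 d0 f (Submodule.Quotient.mk z) =
      Submodule.Quotient.mk ⟨f.lTensor L0 (z : TensorProduct A L0 Q), by
        rw [LinearMap.mem_ker, tsq d0 f, LinearMap.mem_ker.mp z.2, map_zero]⟩ := rfl

variable [Module.Flat A Lm1] [Module.Flat A (Lm1 ⧸ LinearMap.range d0)]

lemma flat_range_d0 : Module.Flat A (LinearMap.range d0) :=
  flat_of_ses (LinearMap.range d0).subtype (LinearMap.range d0).mkQ
    (Submodule.injective_subtype _) (Submodule.mkQ_surjective _)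
    (LinearMap.exact_subtype_mkQ _)

lemma inj_sub (Q : Type u) [AddCommGroup Q] [Module A Q] :
    Function.Injective ((LinearMap.range d0).subtype.rTensor Q) :=
  key_rTensor _ (LinearMap.range d0).mkQ (Submodule.injective_subtype _)
    (Submodule.mkQ_surjective _) (LinearMap.exact_subtype_mkQ _) Q

lemma inj_iota (Q : Type u) [AddCommGroup Q] [Module A Q] :
    Function.Injective ((LinearMap.ker d0).subtype.rTensor Q) := by
  haveI := flat_range_d0 d0
  exact key_rTensor _ d0.rangeRestrict (Submodule.injective_subtype _)
    d0.surjective_rangeRestrict (exact_ker_rr d0) Q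

lemma mem_range_iota {Q : Type u} [AddCommGroup Q] [Module A Q]
    (x : TensorProduct A L0 Q) (hx : x ∈ LinearMap.ker (d0.rTensor Q)) :
    x ∈ Set.range ((LinearMap.ker d0).subtype.rTensor Q) := by
  have hd : (LinearMap.range d0).subtype.comp d0.rangeRestrict = d0 := by ext v; rfl
  have h1 : (LinearMap.range d0).subtype.rTensor Q (d0.rangeRestrict.rTensor Q x) = 0 := by
    rw [← LinearMap.comp_apply, ← LinearMap.rTensor_comp, hd]; exact hx
  have h2 : d0.rangeRestrict.rTensor Q x = 0 := by
    apply inj_sub d0; rw [map_zero]; exact h1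
  exact (rTensor_exact Q (exact_ker_rr d0) d0.surjective_rangeRestrict x).mp h2

end MainAux


section MainAux2
variable {A : Type u} [CommRing A]
    {L1 L0 Lm1 : Type u} [AddCommGroup L1] [AddCommGroup L0] [AddCommGroup Lm1]
    [Module A L1] [Module A L0] [Module A Lm1]
variable (d1 : L1 →ₗ[A] L0) (d0 : L0 →ₗ[A] Lm1)

/-- The corestriction of `(ker d0).subtype ⊗ Q` to `ker (d0 ⊗ Q)`. -/
noncomputable def resQ (Q : Type u) [AddCommGroup Q] [Module A Q] :
    TensorProduct A (LinearMap.ker d0) Q →ₗ[A] LinearMap.ker (d0.rTensor Q) :=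
  LinearMap.codRestrict _ ((LinearMap.ker d0).subtype.rTensor Q) (fun x => by
    have h : d0.comp (LinearMap.ker d0).subtype = 0 := by ext y; simp
    rw [LinearMap.mem_ker, ← LinearMap.comp_apply, ← LinearMap.rTensor_comp, h]
    simp)

lemma natMap_mkQ (Q : Type u) [AddCommGroup Q] [Module A Q]
    (y : TensorProduct A (LinearMap.ker d0) Q) :
    natMap d1 d0 Q
        ((((LinearMap.range d1).comap (LinearMap.ker d0).subtype).mkQ).rTensor Q y) =
      Submodule.Quotient.mk (resQ d0 Q y) := by
  induction y using TensorProduct.induction_on with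
  | zero => simp
  | tmul z q =>
    rw [LinearMap.rTensor_tmul, Submodule.mkQ_apply, natMap_mk_tmul]
    rfl
  | add a b ha hb => rw [map_add, map_add, ha, hb, map_add, Submodule.Quotient.mk_add]

lemma natMap_natural {Q Q' : Type u} [AddCommGroup Q] [Module A Q] [AddCommGroup Q']
    [Module A Q'] (f : Q →ₗ[A] Q') :
    (h0Map d1 d0 f).comp (natMap d1 d0 Q) =
      (natMap d1 d0 Q').comp (LinearMap.lTensor
        (LinearMap.ker d0 ⧸ (LinearMap.range d1).comap (LinearMap.ker d0).subtype) f) := by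
  apply TensorProduct.ext'
  intro h q
  obtain ⟨z, rfl⟩ := Submodule.Quotient.mk_surjective _ h
  rw [LinearMap.comp_apply, LinearMap.comp_apply, LinearMap.lTensor_tmul,
    natMap_mk_tmul, natMap_mk_tmul, h0Map_mk]
  exact congrArg _ (Subtype.ext (LinearMap.lTensor_tmul L0 f _ _))

lemma natMap_natural_apply {Q Q' : Type u} [AddCommGroup Q] [Module A Q] [AddCommGroup Q']
    [Module A Q'] (f : Q →ₗ[A] Q')
    (y : TensorProduct A
      (LinearMap.ker d0 ⧸ (LinearMap.range d1).comap (LinearMap.ker d0).subtype) Q) :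
    h0Map d1 d0 f (natMap d1 d0 Q y) =
      natMap d1 d0 Q' (LinearMap.lTensor
        (LinearMap.ker d0 ⧸ (LinearMap.range d1).comap (LinearMap.ker d0).subtype) f y) :=
  LinearMap.congr_fun (natMap_natural d1 d0 f) y

variable [Module.Flat A Lm1] [Module.Flat A (Lm1 ⧸ LinearMap.range d0)]

lemma natMap_bijective (hc : d0.comp d1 = 0) (Q : Type u) [AddCommGroup Q] [Module A Q] :
    Function.Bijective (natMap d1 d0 Q) := by
  have hd1 : ∀ x : L1, d1 x ∈ LinearMap.ker d0 := fun x => by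
    rw [LinearMap.mem_ker, ← LinearMap.comp_apply, hc, LinearMap.zero_apply]
  set d1c : L1 →ₗ[A] LinearMap.ker d0 := d1.codRestrict _ hd1 with hd1cdef
  set N := (LinearMap.range d1).comap (LinearMap.ker d0).subtype with hNdef
  constructor
  · rw [injective_iff_map_eq_zero]
    intro w hw
    obtain ⟨y, rfl⟩ := LinearMap.rTensor_surjective Q (Submodule.mkQ_surjective N) w
    rw [natMap_mkQ, Submodule.Quotient.mk_eq_zero] at hw
    obtain ⟨u, hu⟩ := Submodule.mem_comap.mp hw
    have hfact : (LinearMap.ker d0).subtype.comp d1c = d1 := by ext v; rfl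
    have h2 : (LinearMap.ker d0).subtype.rTensor Q (d1c.rTensor Q u) =
        (LinearMap.ker d0).subtype.rTensor Q y := by
      rw [← LinearMap.comp_apply, ← LinearMap.rTensor_comp, hfact]; exact hu
    have h3 : d1c.rTensor Q u = y := inj_iota d0 Q h2
    have h4 : N.mkQ.comp d1c = 0 := by
      ext v
      rw [LinearMap.comp_apply, LinearMap.zero_apply, Submodule.mkQ_apply,
        Submodule.Quotient.mk_eq_zero]
      exact Submodule.mem_comap.mpr ⟨v, rfl⟩
    rw [← h3, ← LinearMap.comp_apply, ← LinearMap.rTensor_comp, h4, LinearMap.rTensor_zero,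
      LinearMap.zero_apply]
  · intro w
    obtain ⟨zz, rfl⟩ := Submodule.Quotient.mk_surjective _ w
    obtain ⟨y, hy⟩ := mem_range_iota d0 (zz : TensorProduct A L0 Q) zz.2
    refine ⟨N.mkQ.rTensor Q y, ?_⟩
    rw [natMap_mkQ]
    exact congrArg _ (Subtype.ext hy)

end MainAux2


section MainAux3
variable {A : Type u} [CommRing A]
    {L1 L0 Lm1 : Type u} [AddCommGroup L1] [AddCommGroup L0] [AddCommGroup Lm1]
    [Module A L1] [Module A L0] [Module A Lm1]
variable (d1 : L1 →ₗ[A] L0) (d0 : L0 →ₗ[A] Lm1)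

lemma V_of_bij
    (hbij : ∀ (Q : Type u) [AddCommGroup Q] [Module A Q], Function.Bijective (natMap d1 d0 Q))
    {Q' Q Q'' : Type u} [AddCommGroup Q'] [Module A Q'] [AddCommGroup Q] [Module A Q]
    [AddCommGroup Q''] [Module A Q''] (f : Q' →ₗ[A] Q) (g : Q →ₗ[A] Q'')
    (hfg : Function.Exact f g) (hg : Function.Surjective g) :
    Function.Exact (h0Map d1 d0 f) (h0Map d1 d0 g) ∧ Function.Surjective (h0Map d1 d0 g) := by
  set H := LinearMap.ker d0 ⧸ (LinearMap.range d1).comap (LinearMap.ker d0).subtype with hH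
  have hgf : g.comp f = 0 := by ext a; exact hfg.apply_apply_eq_zero a
  have hexH : Function.Exact (LinearMap.lTensor H f) (LinearMap.lTensor H g) :=
    lTensor_exact H hfg hg
  constructor
  · intro x
    obtain ⟨y, rfl⟩ := (hbij Q).surjective x
    rw [natMap_natural_apply d1 d0 g y]
    constructor
    · intro h0
      have h1 : LinearMap.lTensor H g y = 0 := by
        apply (hbij Q'').injective
        rw [map_zero]; exact h0
      obtain ⟨y', hy'⟩ := (hexH y).mp h1
      exact ⟨natMap d1 d0 Q' y', by
        rw [natMap_natural_apply d1 d0 f y', hy']⟩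
    · rintro ⟨ξ, hξ⟩
      obtain ⟨η, rfl⟩ := (hbij Q').surjective ξ
      rw [natMap_natural_apply d1 d0 f η] at hξ
      have h2 : LinearMap.lTensor H f η = y := (hbij Q).injective hξ
      have h3 : LinearMap.lTensor H g (LinearMap.lTensor H f η) = 0 := by
        rw [← LinearMap.comp_apply, ← LinearMap.lTensor_comp, hgf, LinearMap.lTensor_zero,
          LinearMap.zero_apply]
      rw [← h2, h3, map_zero]
  · intro w
    obtain ⟨v, hv⟩ := (hbij Q'').surjective w
    obtain ⟨u, rfl⟩ := LinearMap.lTensor_surjective H hg v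
    exact ⟨natMap d1 d0 Q u, by
      rw [natMap_natural_apply d1 d0 g u, hv]⟩

lemma flat_of_V (hc : d0.comp d1 = 0) [Module.Flat A Lm1]
    (hV : ∀ (Q' Q Q'' : Type u) [AddCommGroup Q'] [Module A Q'] [AddCommGroup Q] [Module A Q]
        [AddCommGroup Q''] [Module A Q''] (f : Q' →ₗ[A] Q) (g : Q →ₗ[A] Q''),
        Function.Exact f g → Function.Surjective g →
          Function.Exact (h0Map d1 d0 f) (h0Map d1 d0 g) ∧
            Function.Surjective (h0Map d1 d0 g)) :
    Module.Flat A (Lm1 ⧸ LinearMap.range d0) := by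
  rw [Module.Flat.iff_lTensor_preserves_injective_linearMap]
  intro X Y _ _ _ _ f hf
  rw [injective_iff_map_eq_zero]
  intro c hc0
  obtain ⟨-, hsurj⟩ := hV X Y (Y ⧸ LinearMap.range f) f (LinearMap.range f).mkQ
    f.exact_map_mkQ_range (Submodule.mkQ_surjective _)
  set g : Y →ₗ[A] (Y ⧸ LinearMap.range f) := (LinearMap.range f).mkQ with hgdef
  have hfg : Function.Exact f g := f.exact_map_mkQ_range
  have hg : Function.Surjective g := Submodule.mkQ_surjective _
  have hgf : g.comp f = 0 := by ext a; exact hfg.apply_apply_eq_zero a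
  set π : Lm1 →ₗ[A] (Lm1 ⧸ LinearMap.range d0) := (LinearMap.range d0).mkQ with hπdef
  obtain ⟨x, rfl⟩ := LinearMap.rTensor_surjective X
    (Submodule.mkQ_surjective (LinearMap.range d0)) c
  have h1 : π.rTensor Y (f.lTensor Lm1 x) = 0 := (tsq π f x).trans hc0
  have hexd0 : Function.Exact (d0.rTensor Y) (π.rTensor Y) :=
    rTensor_exact Y (LinearMap.exact_map_mkQ_range d0) (Submodule.mkQ_surjective _)
  obtain ⟨y, hy⟩ := (hexd0 _).mp h1
  have hybar_mem : g.lTensor Lm1 (d0.rTensor Y y) = 0 ∧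
      g.lTensor L0 y ∈ LinearMap.ker (d0.rTensor (Y ⧸ LinearMap.range f)) := by
    have hz : g.lTensor Lm1 (d0.rTensor Y y) = 0 := by
      rw [hy, ← LinearMap.comp_apply, ← LinearMap.lTensor_comp, hgf,
        LinearMap.lTensor_zero, LinearMap.zero_apply]
    exact ⟨hz, by rw [LinearMap.mem_ker, tsq d0 g y, hz]⟩
  obtain ⟨ξ, hξ⟩ := hsurj (Submodule.Quotient.mk ⟨g.lTensor L0 y, hybar_mem.2⟩)
  obtain ⟨zz, rfl⟩ := Submodule.Quotient.mk_surjective _ ξ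
  rw [h0Map_mk] at hξ
  obtain ⟨wbar, hw⟩ := Submodule.mem_comap.mp ((Submodule.Quotient.eq _).mp hξ)
  obtain ⟨w, rfl⟩ := LinearMap.lTensor_surjective L1 hg wbar
  have hw' : d1.rTensor (Y ⧸ LinearMap.range f) (g.lTensor L1 w) =
      g.lTensor L0 (zz : TensorProduct A L0 Y) - g.lTensor L0 y := hw
  have h2 : g.lTensor L0 (y + d1.rTensor Y w - (zz : TensorProduct A L0 Y)) = 0 := by
    rw [map_sub, map_add, ← tsq d1 g w, hw']
    abel
  have hexf : Function.Exact (f.lTensor L0) (g.lTensor L0) := lTensor_exact L0 hfg hg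
  obtain ⟨u, hu⟩ := (hexf _).mp h2
  have h3 : f.lTensor Lm1 (d0.rTensor X u) = f.lTensor Lm1 x := by
    rw [← tsq d0 f u, hu, map_sub, map_add, hy, ← LinearMap.comp_apply (d0.rTensor Y),
      ← LinearMap.rTensor_comp, hc, LinearMap.rTensor_zero, LinearMap.zero_apply,
      LinearMap.mem_ker.mp zz.2, add_zero, sub_zero]
  have h4 : d0.rTensor X u = x := Module.Flat.lTensor_preserves_injective_linearMap f hf h3
  have hπd0 : π.comp d0 = 0 := by
    ext v
    exact (Submodule.Quotient.mk_eq_zero _).mpr (LinearMap.mem_range_self d0 v)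
  rw [← h4, ← LinearMap.comp_apply, ← LinearMap.rTensor_comp, hπd0, LinearMap.rTensor_zero,
    LinearMap.zero_apply]

end MainAux3

/-- (4.1) For a complex `L₁ → L₀ → L₋₁` of flat modules with heart `H` and
cokernel `C`, the following are equivalent: (1) the functor
`V : Q ↦ h₀(L• ⊗ Q)` is right exact; (2) the canonical map `H ⊗ Q → h₀(L• ⊗ Q)`
is an isomorphism for all `Q`; (3) `C` is flat. -/
theorem stmt7 (d1 : L1 →ₗ[A] L0) (d0 : L0 →ₗ[A] Lm1) (hc : d0.comp d1 = 0)
    [Module.Flat A L1] [Module.Flat A L0] [Module.Flat A Lm1] :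
    ((∀ (Q' Q Q'' : Type u) [AddCommGroup Q'] [Module A Q'] [AddCommGroup Q] [Module A Q]
        [AddCommGroup Q''] [Module A Q'']
        (f : Q' →ₗ[A] Q) (g : Q →ₗ[A] Q''),
        Function.Exact f g → Function.Surjective g →
          Function.Exact (h0Map d1 d0 f) (h0Map d1 d0 g) ∧
            Function.Surjective (h0Map d1 d0 g)) ↔
      Module.Flat A (Lm1 ⧸ LinearMap.range d0)) ∧
    ((∀ (Q : Type u) [AddCommGroup Q] [Module A Q],
        Function.Bijective (natMap d1 d0 Q)) ↔
      Module.Flat A (Lm1 ⧸ LinearMap.range d0)) := by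
  have bij_of_flat : Module.Flat A (Lm1 ⧸ LinearMap.range d0) →
      ∀ (Q : Type u) [AddCommGroup Q] [Module A Q], Function.Bijective (natMap d1 d0 Q) := by
    intro hFlat Q _ _
    haveI := hFlat
    exact natMap_bijective d1 d0 hc Q
  have V_of : (∀ (Q : Type u) [AddCommGroup Q] [Module A Q],
        Function.Bijective (natMap d1 d0 Q)) →
      ∀ (Q' Q Q'' : Type u) [AddCommGroup Q'] [Module A Q'] [AddCommGroup Q] [Module A Q]
        [AddCommGroup Q''] [Module A Q'']
        (f : Q' →ₗ[A] Q) (g : Q →ₗ[A] Q''),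
        Function.Exact f g → Function.Surjective g →
          Function.Exact (h0Map d1 d0 f) (h0Map d1 d0 g) ∧
            Function.Surjective (h0Map d1 d0 g) := by
    intro hb Q' Q Q'' _ _ _ _ _ _ f g hfg hg
    exact V_of_bij d1 d0 hb f g hfg hg
  refine ⟨⟨fun h => flat_of_V d1 d0 hc h, fun h => V_of (bij_of_flat h)⟩,
    ⟨fun h => flat_of_V d1 d0 hc (V_of h), fun h => bij_of_flat h⟩⟩
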